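/- arXiv:1707.06057 — 2 statements merged into one kernel-verified Lean document; each statement's English description precedes it below -/
import Mathlib

section
/- With the curvature data R^l_{pab} as in the context, for every i, k ∈ {1,…,m} the identity Σ_{l,p} ( η^{kp}·θ_{il} − ½·δ^k_i·Σ_q η^{qp}·θ_{ql} ) ∧ Ω^l_p = −2·Σ_p η^{kp}·( Ric_{pi} − ½·η_{pi}·S )·σ₀ holds in Λ^m(ℝ^m). -/
open ExteriorAlgebra

/-- The degree-1 element θ^i : the i-th standard basis vector of ℝ^m. -/
noncomputable def θ (m : ℕ) (i : Fin m) : ExteriorAlgebra ℝ (Fin m → ℝ) :=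
  ExteriorAlgebra.ι ℝ (Pi.single i 1)

/-- The volume element σ₀ = θ^1 ∧ ⋯ ∧ θ^m. -/
noncomputable def σ₀ (m : ℕ) : ExteriorAlgebra ℝ (Fin m → ℝ) :=
  ((List.finRange m).map (θ m)).prod

/-- Left interior product with the dual basis covector ε^i. -/
noncomputable def contr (m : ℕ) (i : Fin m) (x : ExteriorAlgebra ℝ (Fin m → ℝ)) :
    ExteriorAlgebra ℝ (Fin m → ℝ) :=
  CliffordAlgebra.contractLeft (LinearMap.proj i) x

/-- θ_{i₁⋯i_p} : iterated contraction of σ₀ by ε^{i₁}, …, ε^{i_p} (in this order). -/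
noncomputable def θdown (m : ℕ) (l : List (Fin m)) : ExteriorAlgebra ℝ (Fin m → ℝ) :=
  l.foldl (fun x i => contr m i x) (σ₀ m)

/-- The components η_{ij} = η^{ij} of the matrix diag(1,…,1,−1). -/
noncomputable def ηc (m : ℕ) (i j : Fin m) : ℝ :=
  if i = j then (if (i : ℕ) = m - 1 then -1 else 1) else 0

/-- The curvature 2-form Ω^l_p := Σ_{a,b} R^l_{pab}·θ^a∧θ^b. -/
noncomputable def Ω (m : ℕ) (R : Fin m → Fin m → Fin m → Fin m → ℝ) (l p : Fin m) :
    ExteriorAlgebra ℝ (Fin m → ℝ) :=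
  ∑ a : Fin m, ∑ b : Fin m, R l p a b • (θ m a * θ m b)

/-- The Ricci components Ric_{ij} := Σ_l R^l_{ilj}. -/
def Ric (m : ℕ) (R : Fin m → Fin m → Fin m → Fin m → ℝ) (i j : Fin m) : ℝ :=
  ∑ l : Fin m, R l i l j

/-- The scalar curvature S := Σ_{i,j} η^{ij}·Ric_{ij}. -/
noncomputable def Scal (m : ℕ) (R : Fin m → Fin m → Fin m → Fin m → ℝ) : ℝ :=
  ∑ i : Fin m, ∑ j : Fin m, ηc m i j * Ric m R i j

lemma theta_swap (m : ℕ) (a c : Fin m) : θ m a * θ m c = -(θ m c * θ m a) := by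
  have := ExteriorAlgebra.ι_add_mul_swap (R := ℝ)
    (Pi.single a (1:ℝ) : Fin m → ℝ) (Pi.single c (1:ℝ) : Fin m → ℝ)
  rw [show ExteriorAlgebra.ι ℝ (Pi.single a (1:ℝ) : Fin m → ℝ) = θ m a from rfl,
    show ExteriorAlgebra.ι ℝ (Pi.single c (1:ℝ) : Fin m → ℝ) = θ m c from rfl] at this
  linear_combination (norm := noncomm_ring) this

lemma theta_sq (m : ℕ) (a : Fin m) : θ m a * θ m a = 0 :=
  ExteriorAlgebra.ι_sq_zero _

lemma theta_mul_prod (m : ℕ) (a : Fin m) (l : List (Fin m)) :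
    θ m a * (l.map (θ m)).prod = ((-1:ℝ)^l.length) • ((l.map (θ m)).prod * θ m a) := by
  induction l with
  | nil => simp
  | cons c t ih =>
      simp only [List.map_cons, List.prod_cons, List.length_cons, ← mul_assoc, theta_swap m a c]
      rw [neg_mul, mul_assoc, ih]
      simp [mul_smul_comm, pow_succ, mul_comm, mul_assoc]

lemma prod_mul_self (m : ℕ) (l : List (Fin m)) (a : Fin m) (h : a ∈ l) :
    (l.map (θ m)).prod * θ m a = 0 := by
  induction l with
  | nil => simp at h
  | cons c t ih =>
      simp only [List.map_cons, List.prod_cons, mul_assoc]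
      rcases List.mem_cons.mp h with h | h
      · subst h
        have h2 : (t.map (θ m)).prod * θ m a
            = ((-1:ℝ)^t.length) • (θ m a * (t.map (θ m)).prod) := by
          rw [theta_mul_prod]
          rw [smul_smul, ← pow_add, ← two_mul, pow_mul, neg_one_sq, one_pow, one_smul]
        rw [h2, mul_smul_comm, ← mul_assoc, theta_sq, zero_mul, smul_zero]
      · rw [ih h, mul_zero]

lemma theta_mul_vol (m : ℕ) (a : Fin m) : θ m a * σ₀ m = 0 := by
  rw [σ₀, theta_mul_prod, prod_mul_self m _ a (List.mem_finRange a), smul_zero]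

lemma contr_theta_mul (m : ℕ) (i a : Fin m) (x : ExteriorAlgebra ℝ (Fin m → ℝ)) :
    contr m i (θ m a * x) = (if i = a then (1:ℝ) else 0) • x - θ m a * contr m i x := by
  rw [contr, θ, show ExteriorAlgebra.ι ℝ (Pi.single a (1:ℝ) : Fin m → ℝ)
      = CliffordAlgebra.ι (0 : QuadraticForm ℝ (Fin m → ℝ)) (Pi.single a 1) from rfl,
    CliffordAlgebra.contractLeft_ι_mul]
  simp [Pi.single_apply, contr]

lemma contr_zero (m : ℕ) (i : Fin m) : contr m i 0 = 0 := by simp [contr]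

lemma theta_mul_contr_vol (m : ℕ) (a i : Fin m) :
    θ m a * contr m i (σ₀ m) = (if i = a then (1:ℝ) else 0) • σ₀ m := by
  have h := contr_theta_mul m i a (σ₀ m)
  rw [theta_mul_vol, contr_zero] at h
  exact (sub_eq_zero.mp h.symm).symm

lemma theta_theta_contr_vol (m : ℕ) (a b i : Fin m) :
    θ m a * (θ m b * contr m i (σ₀ m)) = 0 := by
  have h := contr_theta_mul m i a (θ m b * σ₀ m)
  rw [contr_theta_mul m i b (σ₀ m), theta_mul_vol m b, mul_zero, contr_zero, smul_zero,
    zero_sub, mul_sub, mul_smul_comm, theta_mul_vol m a, smul_zero, zero_sub, neg_neg] at h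
  exact h.symm

lemma key_B (m : ℕ) (a b i l : Fin m) :
    θ m a * (θ m b * contr m l (contr m i (σ₀ m)))
      = ((if i = a then (1:ℝ) else 0) * (if l = b then 1 else 0)
          - (if i = b then (1:ℝ) else 0) * (if l = a then 1 else 0)) • σ₀ m := by
  have h := contr_theta_mul m l a (θ m b * contr m i (σ₀ m))
  rw [theta_theta_contr_vol, contr_zero, contr_theta_mul, mul_sub, mul_smul_comm,
    theta_mul_contr_vol, theta_mul_contr_vol] at h
  have h2 : θ m a * (θ m b * contr m l (contr m i (σ₀ m)))
      = (if l = b then (1:ℝ) else 0) • ((if i = a then (1:ℝ) else 0) • σ₀ m)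
        - (if l = a then (1:ℝ) else 0) • ((if i = b then (1:ℝ) else 0) • σ₀ m) := by
    apply eq_of_sub_eq_zero
    calc θ m a * (θ m b * contr m l (contr m i (σ₀ m)))
          - ((if l = b then (1:ℝ) else 0) • ((if i = a then (1:ℝ) else 0) • σ₀ m)
            - (if l = a then (1:ℝ) else 0) • ((if i = b then (1:ℝ) else 0) • σ₀ m))
        = (if l = a then (1:ℝ) else 0) • ((if i = b then (1:ℝ) else 0) • σ₀ m)
          - ((if l = b then (1:ℝ) else 0) • ((if i = a then (1:ℝ) else 0) • σ₀ m)
            - θ m a * (θ m b * contr m l (contr m i (σ₀ m)))) := by abel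
      _ = 0 := h.symm
  rw [h2, smul_smul, smul_smul, ← sub_smul]
  congr 1
  ring

lemma comm_two (m : ℕ) (a b : Fin m) (x : ExteriorAlgebra ℝ (Fin m → ℝ)) :
    x * (θ m a * θ m b) = (θ m a * θ m b) * x := by
  induction x using CliffordAlgebra.induction with
  | algebraMap r => rw [← Algebra.commutes]
  | ι v =>
      show ExteriorAlgebra.ι ℝ v * (θ m a * θ m b) = (θ m a * θ m b) * ExteriorAlgebra.ι ℝ v
      have h1 : ExteriorAlgebra.ι ℝ v * θ m a = -(θ m a * ExteriorAlgebra.ι ℝ v) := by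
        have := ExteriorAlgebra.ι_add_mul_swap (R := ℝ) v (Pi.single a (1:ℝ) : Fin m → ℝ)
        rw [θ]
        linear_combination (norm := noncomm_ring) this
      have h2 : ExteriorAlgebra.ι ℝ v * θ m b = -(θ m b * ExteriorAlgebra.ι ℝ v) := by
        have := ExteriorAlgebra.ι_add_mul_swap (R := ℝ) v (Pi.single b (1:ℝ) : Fin m → ℝ)
        rw [θ]
        linear_combination (norm := noncomm_ring) this
      rw [← mul_assoc, h1, neg_mul, mul_assoc, h2, mul_neg, neg_neg, ← mul_assoc]
  | mul x y hx hy => rw [mul_assoc, hy, ← mul_assoc, hx, mul_assoc]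
  | add x y hx hy => rw [add_mul, mul_add, hx, hy]

lemma key2 (m : ℕ) (R : Fin m → Fin m → Fin m → Fin m → ℝ)
    (hR : ∀ l p a b, R l p a b = - R l p b a) (x l p : Fin m) :
    θdown m [x, l] * Ω m R l p = (2 * R l p x l) • σ₀ m := by
  have hθd : θdown m [x, l] = contr m l (contr m x (σ₀ m)) := rfl
  rw [hθd, Ω, Finset.mul_sum]
  have hterm : ∀ a : Fin m, contr m l (contr m x (σ₀ m)) * ∑ b : Fin m, R l p a b • (θ m a * θ m b)
      = ∑ b : Fin m, (R l p a b * ((if x = a then (1:ℝ) else 0) * (if l = b then 1 else 0)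
          - (if x = b then (1:ℝ) else 0) * (if l = a then 1 else 0))) • σ₀ m := by
    intro a
    rw [Finset.mul_sum]
    refine Finset.sum_congr rfl fun b _ => ?_
    rw [mul_smul_comm, comm_two, mul_assoc, key_B, smul_smul]
  simp only [hterm]
  simp only [← Finset.sum_smul]
  congr 1
  simp only [Finset.sum_sub_distrib, mul_sub, mul_ite, ite_mul, mul_one, mul_zero, zero_mul,
    one_mul, Finset.sum_ite_eq, Finset.sum_ite_eq', Finset.mem_univ, if_true]
  have hcol : (∑ x1 : Fin m, ∑ x2 : Fin m,
      if l = x1 then if x = x2 then R l p x1 x2 else 0 else 0) = R l p l x := by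
    simp
  rw [hcol, hR l p l x]
  ring

/-- Σ_{l,p} ( η^{kp}·θ_{il} − ½·δ^k_i·Σ_q η^{qp}·θ_{ql} ) ∧ Ω^l_p
      = −2·Σ_p η^{kp}·( Ric_{pi} − ½·η_{pi}·S )·σ₀. -/
theorem stmt13 (m : ℕ) (hm : 2 ≤ m) (R : Fin m → Fin m → Fin m → Fin m → ℝ)
    (hR : ∀ l p a b, R l p a b = - R l p b a) (i k : Fin m) :
    ∑ l : Fin m, ∑ p : Fin m,
        (ηc m k p • θdown m [i, l] -
          ((1 : ℝ) / 2 * (if k = i then 1 else 0)) • ∑ q : Fin m, ηc m q p • θdown m [q, l]) *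
          Ω m R l p =
      ∑ p : Fin m,
        (-2 * ηc m k p * (Ric m R p i - 1 / 2 * ηc m p i * Scal m R)) • σ₀ m := by
  simp only [sub_mul, smul_mul_assoc, Finset.sum_mul, key2 m R hR, smul_smul,
    ← Finset.sum_smul, ← sub_smul]
  congr 1
  have hRic : ∀ p x : Fin m, (∑ l : Fin m, R l p x l) = - Ric m R p x := by
    intro p x
    rw [Ric, ← Finset.sum_neg_distrib]
    exact Finset.sum_congr rfl fun l _ => hR l p x l
  rw [Finset.sum_comm]
  simp only [Finset.sum_sub_distrib]
  have hq : ∀ p l : Fin m, (∑ q : Fin m, ηc m q p * (2 * R l p q l))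
      = ηc m p p * (2 * R l p p l) := by
    intro p l
    simp [ηc, ite_mul]
  have hA : ∀ p : Fin m, (∑ l : Fin m, ηc m k p * (2 * R l p i l))
      = ηc m k p * (-2 * Ric m R p i) := by
    intro p
    rw [← Finset.mul_sum]
    rw [show (∑ l : Fin m, 2 * R l p i l) = 2 * ∑ l : Fin m, R l p i l from
      (Finset.mul_sum _ _ _).symm, hRic]
    ring
  have hB : ∀ p : Fin m, (∑ l : Fin m, (1/2 * if k = i then (1:ℝ) else 0)
        * ∑ q : Fin m, ηc m q p * (2 * R l p q l))
      = (if k = i then (1:ℝ) else 0) * (ηc m p p * (- Ric m R p p)) := by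
    intro p
    simp only [hq]
    rw [← Finset.mul_sum, ← Finset.mul_sum]
    rw [show (∑ l : Fin m, 2 * R l p p l) = 2 * ∑ l : Fin m, R l p p l from
      (Finset.mul_sum _ _ _).symm, hRic]
    ring
  have hScal : Scal m R = ∑ p : Fin m, ηc m p p * Ric m R p p := by
    simp [Scal, ηc, ite_mul]
  have hδ : (∑ p : Fin m, ηc m k p * ηc m p i) = (if k = i then (1:ℝ) else 0) := by
    by_cases hki : k = i
    · subst hki
      simp only [if_true, ηc]
      simp [ite_mul, mul_ite]
      split <;> norm_num
    · simp only [ηc, if_neg hki]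
      simp [ite_mul, mul_ite, hki]
  rw [Finset.sum_congr rfl fun p _ => hA p, Finset.sum_congr rfl fun p _ => hB p]
  have hR2 : (∑ p : Fin m, -2 * ηc m k p * (Ric m R p i - 1/2 * ηc m p i * Scal m R))
      = (∑ p : Fin m, ηc m k p * (-2 * Ric m R p i))
        + (∑ p : Fin m, ηc m k p * ηc m p i) * Scal m R := by
    rw [Finset.sum_mul, ← Finset.sum_add_distrib]
    exact Finset.sum_congr rfl fun p _ => by ring
  rw [hR2, hδ, hScal]
  have hneg : (∑ p : Fin m, (if k = i then (1:ℝ) else 0) * (ηc m p p * (- Ric m R p p)))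
      = -((if k = i then (1:ℝ) else 0) * ∑ p : Fin m, ηc m p p * Ric m R p p) := by
    rw [← Finset.mul_sum]
    have h3 : (∑ p : Fin m, ηc m p p * (- Ric m R p p))
        = -∑ p : Fin m, ηc m p p * Ric m R p p := by
      rw [← Finset.sum_neg_distrib]
      exact Finset.sum_congr rfl fun p _ => by ring
    rw [h3, mul_neg]
  rw [hneg, sub_neg_eq_add]
end

section
/- With the curvature data R^l_{pab} as in the context, assume moreover that Ric_{ij} = Ric_{ji} for all i, j. Then the following are equivalent: (1) for all i, k ∈ {1,…,m}, Σ_l θ_{il} ∧ Ω^l_k + Σ_l θ_{kl} ∧ Ω^l_i − η_{ik}·Σ_{p,q,l} η^{pq}·θ_{ql} ∧ Ω^l_p = 0 in Λ^m(ℝ^m); (2) the vacuum Einstein equations Ric_{ij} − ½·η_{ij}·S = 0 hold for all i, j ∈ {1,…,m}. -/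
open ExteriorAlgebra

/-!
Contraction is a graded derivation and `σ₀ ∧ θ^a = 0`, so contracting that identity twice gives
`θ_{il} ∧ θ^a ∧ θ^b = (δ_{ia} δ_{lb} - δ_{la} δ_{ib}) σ₀`. With the antisymmetry of `R` in its last
two indices this turns `Σ_l θ_{il} ∧ Ω^l_k` into `-2 Ric_{ki} σ₀`, and the `(i, k)` equation of (1)
into `-4 (Ric_{ik} - ½ η_{ik} S) σ₀ = 0`. Finally `σ₀ ≠ 0`, since the determinant, extended to the
exterior algebra, takes the value `1` on it.
-/

namespace CliffordAlgebra

variable {R M : Type*} [CommRing R] [AddCommGroup M] [Module R M] {Q : QuadraticForm R M}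
  (d : Module.Dual R M)

theorem contractLeft_mul_ι (x : CliffordAlgebra Q) (v : M) :
    contractLeft d (x * ι Q v) = contractLeft d x * ι Q v + d v • involute x := by
  induction x using left_induction with
  | algebraMap r =>
    rw [contractLeft_algebraMap_mul, contractLeft_ι, contractLeft_algebraMap, zero_mul, zero_add,
      AlgHom.commutes, Algebra.smul_def, ← map_mul, ← map_mul, mul_comm]
  | add x y hx hy =>
    simp only [add_mul, map_add, hx, hy, smul_add]
    abel
  | ι_mul w y hy =>
    rw [mul_assoc, contractLeft_ι_mul, hy, contractLeft_ι_mul]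
    simp only [mul_add, sub_mul, smul_mul_assoc, mul_smul_comm, map_mul, involute_ι, neg_mul,
      smul_neg, mul_assoc]
    abel

theorem involute_contractLeft (x : CliffordAlgebra Q) :
    involute (contractLeft d x) = -contractLeft d (involute x) := by
  induction x using left_induction with
  | algebraMap r => simp
  | add x y hx hy => simp only [map_add, hx, hy, neg_add]
  | ι_mul w y hy =>
    simp only [contractLeft_ι_mul, map_sub, map_smul, map_mul, involute_ι, hy, neg_mul, mul_neg,
      map_neg, neg_neg, neg_sub]

end CliffordAlgebra

open CliffordAlgebra

namespace ExteriorAlgebra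

variable {R M : Type*} [CommRing R] [AddCommGroup M] [Module R M]

theorem contractLeft_mul_ι_of_mul_ι_eq_zero (d : Module.Dual R M) {x : ExteriorAlgebra R M}
    {v : M} (hx : x * ι R v = 0) :
    contractLeft d x * ι R v = -(d v • involute x) := by
  have h : contractLeft d (x * ι R v) = contractLeft d x * ι R v + d v • involute x :=
    contractLeft_mul_ι d x v
  rwa [hx, map_zero, eq_comm, add_eq_zero_iff_eq_neg] at h

end ExteriorAlgebra

section VolumeForm

variable {m : ℕ}

theorem σ₀_eq_ιMulti : σ₀ m = ιMulti ℝ m (Pi.basisFun ℝ (Fin m)) := by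
  rw [σ₀, ιMulti_apply, List.ofFn_eq_map]
  simp only [Pi.basisFun_apply]
  rfl

theorem σ₀_mul_θ (a : Fin m) : σ₀ m * θ m a = 0 := by
  have hθ : θ m a = ιMulti ℝ 1 (fun _ => Pi.single a 1) := by simp [θ, Matrix.vecTail]
  rw [σ₀_eq_ιMulti, hθ, ιMulti_mul_ιMulti]
  refine ιMulti_eq_zero_of_not_inj fun hinj => ?_
  have := @hinj (Fin.castAdd 1 a) (Fin.natAdd m 0) (by simp)
  exact absurd (congrArg Fin.val this) (by simp; omega)

theorem involute_σ₀ : involute (σ₀ m) = (-1 : ℝ) ^ m • σ₀ m := by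
  rw [σ₀, show θ m = ι ℝ ∘ fun i => Pi.single i 1 from rfl, ← List.map_map]
  simpa using involute_prod_map_ι (Q := 0) ((List.finRange m).map fun i => Pi.single i 1)

theorem σ₀_ne_zero : σ₀ m ≠ 0 := by
  intro h
  have := congrArg (liftAlternating (Pi.single (M := fun n => (Fin m → ℝ) [⋀^Fin n]→ₗ[ℝ] ℝ) m
    (Pi.basisFun ℝ (Fin m)).det)) h
  rw [σ₀_eq_ιMulti, liftAlternating_apply_ιMulti, Pi.single_eq_same, Module.Basis.det_self,
    map_zero] at this
  exact one_ne_zero this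

theorem contr_σ₀_mul_θ (i a : Fin m) :
    contr m i (σ₀ m) * θ m a = -((-1 : ℝ) ^ m * if i = a then 1 else 0) • σ₀ m := by
  rw [contr, θ, contractLeft_mul_ι_of_mul_ι_eq_zero _ (σ₀_mul_θ a), involute_σ₀, smul_smul,
    LinearMap.proj_apply, Pi.single_apply, neg_smul, mul_comm]

theorem θdown_pair_mul_θ (i l a : Fin m) :
    θdown m [i, l] * θ m a = (-1 : ℝ) ^ m •
      ((if l = a then 1 else 0 : ℝ) • contr m i (σ₀ m) -
        (if i = a then 1 else 0 : ℝ) • contr m l (σ₀ m)) := by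
  have h : contr m l (contr m i (σ₀ m) * θ m a) =
      θdown m [i, l] * θ m a + (if l = a then 1 else 0 : ℝ) • involute (contr m i (σ₀ m)) := by
    rw [contr, θ, contractLeft_mul_ι, LinearMap.proj_apply, Pi.single_apply]
    rfl
  rw [contr_σ₀_mul_θ] at h
  simp only [contr, map_smul, involute_contractLeft, involute_σ₀] at h ⊢
  rw [eq_sub_of_add_eq h.symm]
  module

theorem θdown_pair_mul_θ_mul_θ (i l a b : Fin m) :
    θdown m [i, l] * (θ m a * θ m b) =
      ((if i = a then 1 else 0) * (if l = b then 1 else 0) -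
        (if l = a then 1 else 0) * (if i = b then 1 else 0) : ℝ) • σ₀ m := by
  have hsign : (-1 : ℝ) ^ m * (-1) ^ m = 1 := by rw [← mul_pow]; norm_num
  rw [← mul_assoc, θdown_pair_mul_θ, smul_mul_assoc, sub_mul, smul_mul_assoc, smul_mul_assoc,
    contr_σ₀_mul_θ, contr_σ₀_mul_θ, smul_smul, smul_smul, ← sub_smul, smul_smul]
  congr 1
  linear_combination ((if i = a then 1 else 0) * (if l = b then 1 else 0) -
    (if l = a then 1 else 0) * (if i = b then 1 else 0) : ℝ) * hsign

end VolumeForm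

section Curvature

variable {m : ℕ} {R : Fin m → Fin m → Fin m → Fin m → ℝ}

theorem θdown_pair_mul_Ω (i l k : Fin m) :
    θdown m [i, l] * Ω m R l k = (R l k i l - R l k l i) • σ₀ m := by
  simp only [Ω, Finset.mul_sum, mul_smul_comm, θdown_pair_mul_θ_mul_θ, smul_smul,
    ← Finset.sum_smul]
  congr 1
  simp [mul_sub, Finset.sum_sub_distrib, Finset.sum_ite_eq]

theorem sum_θdown_pair_mul_Ω (hR : ∀ l p a b, R l p a b = -R l p b a) (i k : Fin m) :
    ∑ l, θdown m [i, l] * Ω m R l k = (-2 * Ric m R k i) • σ₀ m := by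
  simp only [θdown_pair_mul_Ω, ← Finset.sum_smul, Ric, Finset.mul_sum]
  congr 1
  refine Finset.sum_congr rfl fun l _ => ?_
  rw [hR l k i l]
  ring

theorem sum_η_θdown_pair_mul_Ω (hR : ∀ l p a b, R l p a b = -R l p b a) :
    ∑ p, ∑ q, ∑ l, ηc m p q • (θdown m [q, l] * Ω m R l p) = (-2 * Scal m R) • σ₀ m := by
  simp only [← Finset.smul_sum, sum_θdown_pair_mul_Ω hR, smul_smul, ← Finset.sum_smul, Scal,
    Finset.mul_sum]
  congr 1
  exact Finset.sum_congr rfl fun p _ => Finset.sum_congr rfl fun q _ => by ring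

theorem einstein_form_eq_smul_σ₀ (hR : ∀ l p a b, R l p a b = -R l p b a)
    (hsym : ∀ i j, Ric m R i j = Ric m R j i) (i k : Fin m) :
    (∑ l, θdown m [i, l] * Ω m R l k) + (∑ l, θdown m [k, l] * Ω m R l i) -
        ηc m i k • (∑ p, ∑ q, ∑ l, ηc m p q • (θdown m [q, l] * Ω m R l p)) =
      (-4 * (Ric m R i k - 1 / 2 * ηc m i k * Scal m R)) • σ₀ m := by
  rw [sum_θdown_pair_mul_Ω hR, sum_θdown_pair_mul_Ω hR, sum_η_θdown_pair_mul_Ω hR, hsym k i,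
    smul_smul, ← add_smul, ← sub_smul]
  ring_nf

end Curvature

theorem stmt14_general (m : ℕ) (R : Fin m → Fin m → Fin m → Fin m → ℝ)
    (hR : ∀ l p a b, R l p a b = - R l p b a)
    (hsym : ∀ i j, Ric m R i j = Ric m R j i) :
    (∀ i k : Fin m,
        (∑ l : Fin m, θdown m [i, l] * Ω m R l k) +
          (∑ l : Fin m, θdown m [k, l] * Ω m R l i) -
          ηc m i k • (∑ p : Fin m, ∑ q : Fin m, ∑ l : Fin m,
            ηc m p q • (θdown m [q, l] * Ω m R l p)) = 0) ↔
      (∀ i j : Fin m, Ric m R i j - 1 / 2 * ηc m i j * Scal m R = 0) := by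
  simp only [einstein_form_eq_smul_σ₀ hR hsym, smul_eq_zero, σ₀_ne_zero, or_false, mul_eq_zero,
    neg_eq_zero, four_ne_zero, false_or]

/-- Assuming Ric is symmetric, the equations
Σ_l θ_{il}∧Ω^l_k + Σ_l θ_{kl}∧Ω^l_i − η_{ik}·Σ_{p,q,l} η^{pq}·θ_{ql}∧Ω^l_p = 0 (for all i,k)
are equivalent to the vacuum Einstein equations Ric_{ij} − ½·η_{ij}·S = 0 (for all i,j). -/
theorem stmt14 (m : ℕ) (hm : 2 ≤ m) (R : Fin m → Fin m → Fin m → Fin m → ℝ)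
    (hR : ∀ l p a b, R l p a b = - R l p b a)
    (hsym : ∀ i j, Ric m R i j = Ric m R j i) :
    (∀ i k : Fin m,
        (∑ l : Fin m, θdown m [i, l] * Ω m R l k) +
          (∑ l : Fin m, θdown m [k, l] * Ω m R l i) -
          ηc m i k • (∑ p : Fin m, ∑ q : Fin m, ∑ l : Fin m,
            ηc m p q • (θdown m [q, l] * Ω m R l p)) = 0) ↔
      (∀ i j : Fin m, Ric m R i j - 1 / 2 * ηc m i j * Scal m R = 0) :=
  stmt14_general m R hR hsym
end
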